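/- Let n ≥ 1 be an integer and let ζ = exp(2πi/n). The n×n discrete Fourier transform matrix F_n, whose rows and columns are indexed by 0,1,…,n−1 and whose (j,k)-entry is ζ^{jk}/√n, has the nonvanishing minors property if and only if n is prime or n = 1. -/

import Mathlib

/-!
Let `p` be prime, `ζ` a primitive `p`-th root of unity and `λ = ζ - 1`, a prime of `ℤ[ζ]` with
`λ ∣ m ↔ p ∣ m` for integers `m`. If `w` is a kernel vector of `(ζ ^ (rᵢ cⱼ))` over `ℤ[ζ]`, the
polynomial `∑ wⱼ X ^ cⱼ` vanishes at the `k` distinct points `ζ ^ rᵢ`, all congruent to `1`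
mod `λ`, so modulo `λ` it is divisible by `(X - 1) ^ k`. Applying `(X d/dX) ^ m` for `m < k` and
evaluating at `1` gives `∑ wⱼ cⱼ ^ m ≡ 0`; the `cⱼ` are distinct in `ℤ[ζ]/λ = 𝔽ₚ`, so the
Vandermonde determinant forces `λ ∣ wⱼ`. Dividing `w` by `λ` again and again is impossible unless
`w = 0`. If instead `n = a b` is composite, rows `{0, a}` and columns `{0, b}` give the singular
minor `[[1, 1], [1, ζ ^ (a b)]] = [[1, 1], [1, 1]]`.
-/

open Polynomial NumberField
open scoped Matrix

namespace Polynomial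

variable {R : Type*} [CommRing R]

noncomputable def eulerOp : Module.End R R[X] := LinearMap.mulLeft R X ∘ₗ derivative

theorem eulerOp_apply (f : R[X]) : eulerOp f = X * derivative f := rfl

theorem eulerOp_pow_C_mul_X_pow (m e : ℕ) (a : R) :
    (eulerOp ^ m) (C a * X ^ e) = C (a * (e : R) ^ m) * X ^ e := by
  induction m with
  | zero => simp
  | succ m ih =>
    rw [pow_succ', Module.End.mul_apply, ih, eulerOp_apply, derivative_C_mul_X_pow]
    cases e with
    | zero => simp
    | succ e => simp only [Nat.add_sub_cancel, C_mul, map_pow, map_natCast]; ring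

theorem pow_dvd_eulerOp {t : R} {s : ℕ} {f : R[X]} (h : (X - C t) ^ (s + 1) ∣ f) :
    (X - C t) ^ s ∣ eulerOp f := by
  obtain ⟨g, rfl⟩ := h
  refine ⟨X * (C ((s + 1 : ℕ) : R) * g + (X - C t) * derivative g), ?_⟩
  simp only [eulerOp_apply, derivative_mul, derivative_pow, derivative_sub, derivative_X,
    derivative_C, map_natCast]
  push_cast
  ring

theorem pow_dvd_eulerOp_pow {t : R} {s m : ℕ} {f : R[X]} (h : (X - C t) ^ (s + m) ∣ f) :
    (X - C t) ^ s ∣ (eulerOp ^ m) f := by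
  induction m generalizing f with
  | zero => simpa using h
  | succ m ih =>
    rw [pow_succ, Module.End.mul_apply]
    exact ih (pow_dvd_eulerOp (by rwa [← add_assoc] at h))

theorem isRoot_eulerOp_pow {t : R} {k m : ℕ} {f : R[X]} (h : (X - C t) ^ k ∣ f) (hm : m < k) :
    ((eulerOp ^ m) f).IsRoot t := by
  have : (X - C t) ^ 1 ∣ (eulerOp ^ m) f := pow_dvd_eulerOp_pow ((pow_dvd_pow _ (by omega)).trans h)
  rwa [pow_one, dvd_iff_isRoot] at this

theorem sum_mul_pow_mul_pow_eq_zero_of_pow_dvd {ι : Type*} (s : Finset ι) (a : ι → R) (c : ι → ℕ)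
    {t : R} {k m : ℕ} (h : (X - C t) ^ k ∣ ∑ j ∈ s, C (a j) * X ^ c j) (hm : m < k) :
    ∑ j ∈ s, a j * (c j : R) ^ m * t ^ c j = 0 := by
  simpa [eulerOp_pow_C_mul_X_pow, eval_finsetSum] using isRoot_eulerOp_pow h hm

theorem prod_X_sub_C_dvd_of_injective [IsDomain R] {ι : Type*} [Fintype ι] {v : ι → R}
    (hv : Function.Injective v) {f : R[X]} (hf : ∀ i, f.IsRoot (v i)) : ∏ i, (X - C (v i)) ∣ f := by
  rcases eq_or_ne f 0 with rfl | hf0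
  · exact dvd_zero _
  have hle : Finset.univ.val.map v ≤ f.roots := by
    rw [Multiset.le_iff_subset (Multiset.Nodup.map hv Finset.univ.nodup)]
    intro x hx
    obtain ⟨i, -, rfl⟩ := Multiset.mem_map.1 hx
    exact (mem_roots hf0).2 (hf i)
  have := (Multiset.prod_X_sub_C_dvd_iff_le_roots hf0 _).2 hle
  rwa [Multiset.map_map, ← Finset.prod_eq_multiset_prod] at this

end Polynomial

section Domain

variable {R : Type*} [CommRing R] [IsDomain R]

theorem dvd_of_forall_sum_mul_pow_mul_eq_zero {π z : R} (hπ : Prime π) (hz : π ∣ z - 1)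
    {k : ℕ} {r c : Fin k → ℕ} (hr : Function.Injective fun i ↦ z ^ r i)
    (hc : Function.Injective fun j ↦ (c j : R ⧸ Ideal.span {π}))
    {w : Fin k → R} (hw : ∀ i, ∑ j, w j * z ^ (r i * c j) = 0) (j : Fin k) : π ∣ w j := by
  set mk := Ideal.Quotient.mk (Ideal.span {π})
  have hmk : ∀ x, mk x = 0 ↔ π ∣ x := fun x ↦ by
    rw [Ideal.Quotient.eq_zero_iff_mem, Ideal.mem_span_singleton]
  have : (Ideal.span {π}).IsPrime := (Ideal.span_singleton_prime hπ.ne_zero).2 hπ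
  have hroots : ∀ i, (∑ j, C (w j) * X ^ c j).IsRoot (z ^ r i) := fun i ↦ by
    simpa [eval_finsetSum, ← pow_mul] using hw i
  have hmkz : mk z = 1 := by rw [← sub_eq_zero, ← map_one mk, ← map_sub, hmk]; exact hz
  have hdvd : (X - C 1) ^ k ∣ ∑ j, C (mk (w j)) * X ^ c j := by
    simpa [Polynomial.map_prod, Polynomial.map_sum, hmkz] using
      Polynomial.map_dvd mk (prod_X_sub_C_dvd_of_injective hr hroots)
  have hsum : ∀ m : Fin k, ∑ j, mk (w j) * (c j : R ⧸ Ideal.span {π}) ^ (m : ℕ) = 0 := fun m ↦ by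
    simpa using sum_mul_pow_mul_pow_eq_zero_of_pow_dvd _ _ _ hdvd m.2
  exact (hmk _).1 (congrFun (Matrix.eq_zero_of_forall_pow_sum_mul_pow_eq_zero hc hsum) j)

theorem Matrix.det_ne_zero_of_forall_mulVec_eq_zero_dvd [WfDvdMonoid R] {n : Type*} [Fintype n]
    [DecidableEq n] {M : Matrix n n R} {π : R} (hπ : ¬IsUnit π) (hπ0 : π ≠ 0)
    (h : ∀ w, M *ᵥ w = 0 → ∀ j, π ∣ w j) : M.det ≠ 0 := by
  have hpow : ∀ m w, M *ᵥ w = 0 → ∀ j, π ^ m ∣ w j := by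
    intro m
    induction m with
    | zero => simp
    | succ m ih =>
      intro w hw j
      choose u hu using h w hw
      have hu0 : M *ᵥ u = 0 := by
        have : π • M *ᵥ u = 0 := by
          rwa [← Matrix.mulVec_smul, show π • u = w from funext fun j ↦ (hu j).symm]
        exact (smul_eq_zero.1 this).resolve_left hπ0
      rw [hu j, pow_succ']
      exact mul_dvd_mul_left π (ih u hu0 j)
  intro hdet
  obtain ⟨w, hw0, hw⟩ := Matrix.exists_mulVec_eq_zero_iff.2 hdet
  obtain ⟨j, hj⟩ := Function.ne_iff.1 hw0
  obtain ⟨m, hm⟩ := FiniteMultiplicity.of_not_isUnit hπ hj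
  exact hm (hpow (m + 1) w hw j)

end Domain

theorem IsPrimitiveRoot.det_toInteger_pow_mul_ne_zero {p : ℕ} [Fact p.Prime] {K : Type*} [Field K]
    [NumberField K] [IsCyclotomicExtension {p} ℚ K] {ζ : K} (hζ : IsPrimitiveRoot ζ p) {k : ℕ}
    {r c : Fin k → Fin p} (hr : Function.Injective r) (hc : Function.Injective c) :
    (Matrix.of fun i j ↦ hζ.toInteger ^ ((r i : ℕ) * (c j : ℕ))).det ≠ 0 := by
  have hπ := hζ.zeta_sub_one_prime'
  refine Matrix.det_ne_zero_of_forall_mulVec_eq_zero_dvd hπ.not_isUnit hπ.ne_zero fun w hw ↦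
    dvd_of_forall_sum_mul_pow_mul_eq_zero (r := fun i ↦ r i) (c := fun j ↦ c j) hπ dvd_rfl
      ?_ ?_ fun i ↦ ?_
  · intro i i' h
    exact hr (Fin.ext (hζ.toInteger_isPrimitiveRoot.pow_inj (r i).2 (r i').2 h))
  · intro j j' h
    have hdvd : (p : ℤ) ∣ (c j : ℤ) - (c j' : ℤ) := by
      rw [← IsCyclotomicExtension.Rat.zeta_sub_one_dvd_intCast_iff' p hζ,
        ← Ideal.mem_span_singleton]
      push_cast
      rw [← Ideal.Quotient.eq]
      simpa using h
    have hsub := Int.eq_zero_of_abs_lt_dvd hdvd (by rw [abs_sub_lt_iff]; omega)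
    exact hc (Fin.ext (by omega))
  · simpa [Matrix.mulVec, dotProduct, mul_comm] using congrFun hw i

theorem IsPrimitiveRoot.det_pow_mul_ne_zero {L : Type*} [Field L] [CharZero L] {p : ℕ}
    [hp : Fact p.Prime] {μ : L} (hμ : IsPrimitiveRoot μ p) {k : ℕ} {r c : Fin k → Fin p}
    (hr : Function.Injective r) (hc : Function.Injective c) :
    (Matrix.of fun i j ↦ μ ^ ((r i : ℕ) * (c j : ℕ))).det ≠ 0 := by
  -- not found by instance search: the library states it for `CyclotomicField.algebra`
  have : IsCyclotomicExtension {p} ℚ (CyclotomicField p ℚ) :=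
    CyclotomicField.isCyclotomicExtension p ℚ
  have hζ := IsCyclotomicExtension.zeta_spec p ℚ (CyclotomicField p ℚ)
  have hμ_root : aeval μ (minpoly ℚ (hζ.powerBasis ℚ).gen) = 0 := by
    rw [hζ.powerBasis_gen ℚ, ← cyclotomic_eq_minpoly_rat hζ hp.out.pos,
      cyclotomic_eq_minpoly_rat hμ hp.out.pos]
    exact minpoly.aeval ℚ μ
  let ψ : CyclotomicField p ℚ →+* L := (hζ.powerBasis ℚ).lift μ hμ_root
  let φ : 𝓞 (CyclotomicField p ℚ) →+* L := ψ.comp (algebraMap _ _)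
  have hφ : Function.Injective φ := ψ.injective.comp RingOfIntegers.coe_injective
  have hφζ : φ hζ.toInteger = μ := by
    change ψ (IsCyclotomicExtension.zeta p ℚ _) = μ
    rw [← hζ.powerBasis_gen ℚ]
    exact (hζ.powerBasis ℚ).lift_gen μ hμ_root
  have := (map_ne_zero_iff φ hφ).2 (hζ.det_toInteger_pow_mul_ne_zero hr hc)
  rw [RingHom.map_det] at this
  convert this using 2
  ext i j
  simp [hφζ]

theorem exists_det_pow_mul_eq_zero_of_not_prime {R : Type*} [CommRing R] {n : ℕ} {z : R}
    (hz : z ^ n = 1) (hn : 2 ≤ n) (hnp : ¬n.Prime) :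
    ∃ r c : Fin 2 → Fin n, Function.Injective r ∧ Function.Injective c ∧
      (Matrix.of fun i j ↦ z ^ ((r i : ℕ) * (c j : ℕ))).det = 0 := by
  obtain ⟨a, ⟨b, rfl⟩, ha, hab⟩ := Nat.exists_dvd_of_not_prime2 hn hnp
  have hb : 1 < b := by nlinarith
  have hba : b < a * b := by nlinarith
  refine ⟨![⟨0, by omega⟩, ⟨a, hab⟩], ![⟨0, by omega⟩, ⟨b, hba⟩],
    injective_pair_iff_ne.2 (Fin.ne_of_val_ne (by simp; omega)),
    injective_pair_iff_ne.2 (Fin.ne_of_val_ne (by simp; omega)), ?_⟩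
  simp [Matrix.det_fin_two, hz]

theorem dft_minor_eq_smul (n k : ℕ) (ri ci : Fin k → Fin n) :
    (Matrix.of fun i j : Fin k =>
        Complex.exp (2 * Real.pi * Complex.I * ((ri i : ℕ) * (ci j : ℕ) : ℕ) / n)
          / (Real.sqrt n : ℂ)) =
      (Real.sqrt n : ℂ)⁻¹ • Matrix.of fun i j : Fin k =>
        Complex.exp (2 * Real.pi * Complex.I / n) ^ ((ri i : ℕ) * (ci j : ℕ)) := by
  ext i j
  rw [Matrix.smul_apply, Matrix.of_apply, Matrix.of_apply, smul_eq_mul, ← Complex.exp_nat_mul,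
    div_eq_inv_mul _ (Real.sqrt n : ℂ)]
  push_cast
  ring_nf

theorem dft_nonvanishing_minors_iff (n : ℕ) (hn : 1 ≤ n) :
    (∀ (k : ℕ) (ri ci : Fin k → Fin n), Function.Injective ri → Function.Injective ci →
      (Matrix.of fun i j : Fin k =>
        Complex.exp (2 * Real.pi * Complex.I * ((ri i : ℕ) * (ci j : ℕ) : ℕ) / n)
          / (Real.sqrt n : ℂ)).det ≠ 0)
    ↔ (n.Prime ∨ n = 1) := by
  have hμ := Complex.isPrimitiveRoot_exp n (by omega)
  have hsqrt : (Real.sqrt n : ℂ) ≠ 0 := by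
    rw [Complex.ofReal_ne_zero, Real.sqrt_ne_zero']
    exact_mod_cast hn
  simp only [dft_minor_eq_smul, Matrix.det_smul, Fintype.card_fin, mul_ne_zero_iff,
    fun k ↦ pow_ne_zero k (inv_ne_zero hsqrt), ne_eq, not_false_eq_true, true_and]
  constructor
  · intro h
    by_contra hn'
    obtain ⟨hnp, hn1⟩ := not_or.1 hn'
    obtain ⟨ri, ci, hri, hci, hdet⟩ :=
      exists_det_pow_mul_eq_zero_of_not_prime hμ.pow_eq_one (by omega) hnp
    exact h 2 ri ci hri hci hdet
  · rintro (hp | rfl) k ri ci hri hci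
    · have : Fact n.Prime := ⟨hp⟩
      exact hμ.det_pow_mul_ne_zero hri hci
    · have hk : k ≤ 1 := by simpa using Fintype.card_le_of_injective ri hri
      interval_cases k <;> simp
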